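/- arXiv:1503.08400 — 2 statements merged into one kernel-verified Lean document; each statement's English description precedes it below -/
import Mathlib

section
/- Monotonicity property of GreedyQR: If the permutation Π = S_(1)…S_(l) is greedy-by-query-rate, then the sequence of realized query rates v_i = r_i / (ta_(i) + tr_(i)·|S_(i)|), where r_i = |S_(i) \ (S_(1) ∪ … ∪ S_(i−1))|, is nonincreasing: v_1 ≥ v_2 ≥ … ≥ v_l. -/
open Finset

variable {α : Type*}

/-- The tuples retrieved from the first `p` positions of the permutation `σ`
(position `i` queries source `σ i`). -/
def prefUnion [DecidableEq α] {l : ℕ} (S : Fin l → Finset α)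
    (σ : Equiv.Perm (Fin l)) (p : ℕ) : Finset α :=
  (Finset.univ.filter (fun i : Fin l => (i : ℕ) < p)).biUnion (fun i => S (σ i))

/-- The residual count at position `i` of the permutation `σ`:
the number of tuples of the `i`-th queried source not contained in any earlier source. -/
def resid [DecidableEq α] {l : ℕ} (S : Fin l → Finset α)
    (σ : Equiv.Perm (Fin l)) (i : Fin l) : ℕ :=
  (S (σ i) \ prefUnion S σ (i : ℕ)).card

/-- The time needed to query source `i` completely: access time plus
per-tuple transfer time times the number of tuples. -/
def srcTime {l : ℕ} (S : Fin l → Finset α) (ta tr : Fin l → ℝ) (i : Fin l) : ℝ :=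
  ta i + tr i * (S i).card

/-- Cumulative residual tuple count of the first `p` positions. -/
def cumResid [DecidableEq α] {l : ℕ} (S : Fin l → Finset α)
    (σ : Equiv.Perm (Fin l)) (p : ℕ) : ℕ :=
  ∑ i ∈ Finset.univ.filter (fun i : Fin l => (i : ℕ) < p), resid S σ i

/-- Cumulative time cost of querying the first `p` positions. -/
def cumTime {l : ℕ} (S : Fin l → Finset α) (ta tr : Fin l → ℝ)
    (σ : Equiv.Perm (Fin l)) (p : ℕ) : ℝ :=
  ∑ i ∈ Finset.univ.filter (fun i : Fin l => (i : ℕ) < p), srcTime S ta tr (σ i)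

/-- `i_k`: the least prefix length whose cumulative residual count reaches `k`. -/
noncomputable def ikOf [DecidableEq α] {l : ℕ} (S : Fin l → Finset α)
    (σ : Equiv.Perm (Fin l)) (k : ℕ) : ℕ :=
  sInf {p : ℕ | k ≤ cumResid S σ p}

/-- The average query rate `v_avg(Π, k)`. -/
noncomputable def vAvg [DecidableEq α] {l : ℕ} (S : Fin l → Finset α) (ta tr : Fin l → ℝ)
    (σ : Equiv.Perm (Fin l)) (k : ℕ) : ℝ :=
  (cumResid S σ (ikOf S σ k) : ℝ) / cumTime S ta tr σ (ikOf S σ k)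

/-- The time cost `T(Q_k(Π)) = k / v_avg(Π, k)`. -/
noncomputable def timeCost [DecidableEq α] {l : ℕ} (S : Fin l → Finset α) (ta tr : Fin l → ℝ)
    (σ : Equiv.Perm (Fin l)) (k : ℕ) : ℝ :=
  (k : ℝ) / vAvg S ta tr σ k

/-- A permutation is greedy-by-query-rate if at each step `i` the chosen source
maximizes the query rate `|S \ U_{i-1}| / (ta + tr·|S|)` among all
not-yet-chosen sources (which occupy the positions `j ≥ i`). -/
def IsGreedyRate [DecidableEq α] {l : ℕ} (S : Fin l → Finset α) (ta tr : Fin l → ℝ)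
    (σ : Equiv.Perm (Fin l)) : Prop :=
  ∀ i j : Fin l, i ≤ j →
    ((S (σ j) \ prefUnion S σ (i : ℕ)).card : ℝ) / srcTime S ta tr (σ j)
      ≤ ((S (σ i) \ prefUnion S σ (i : ℕ)).card : ℝ) / srcTime S ta tr (σ i)

/-- A permutation is optimal if its time cost is minimal among all permutations. -/
def IsOptimal [DecidableEq α] {l : ℕ} (S : Fin l → Finset α) (ta tr : Fin l → ℝ)
    (σopt : Equiv.Perm (Fin l)) (k : ℕ) : Prop :=
  ∀ σ : Equiv.Perm (Fin l), timeCost S ta tr σopt k ≤ timeCost S ta tr σ k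

/-- **Monotonicity property of GreedyQR.** For a greedy-by-query-rate
permutation, the realized query rates
`v_i = r_i / (ta_(i) + tr_(i)·|S_(i)|)` are nonincreasing along the permutation. -/
theorem greedyRate_monotone [DecidableEq α] {l : ℕ}
    (S : Fin l → Finset α) (ta tr : Fin l → ℝ)
    (hta : ∀ i, 0 ≤ ta i) (htr : ∀ i, 0 < tr i)
    (σ : Equiv.Perm (Fin l)) (hσ : IsGreedyRate S ta tr σ) :
    ∀ i j : Fin l, i ≤ j →
      (resid S σ j : ℝ) / srcTime S ta tr (σ j)
        ≤ (resid S σ i : ℝ) / srcTime S ta tr (σ i) := by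
  intro i j hij
  have hsub : prefUnion S σ (i : ℕ) ⊆ prefUnion S σ (j : ℕ) := by
    apply Finset.biUnion_subset_biUnion_of_subset_left
    intro x hx
    simp only [Finset.mem_filter, Finset.mem_univ, true_and] at hx ⊢
    omega
  have hcard : (resid S σ j : ℝ) ≤ ((S (σ j) \ prefUnion S σ (i : ℕ)).card : ℝ) := by
    exact_mod_cast Finset.card_le_card (Finset.sdiff_subset_sdiff le_rfl hsub)
  have htnn : ∀ m : Fin l, 0 ≤ srcTime S ta tr m := by
    intro m
    have := (htr m).le
    have := hta m
    unfold srcTime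
    positivity
  have h1 : (resid S σ j : ℝ) / srcTime S ta tr (σ j)
      ≤ ((S (σ j) \ prefUnion S σ (i : ℕ)).card : ℝ) / srcTime S ta tr (σ j) := by
    rcases eq_or_lt_of_le (htnn (σ j)) with h | h
    · rw [← h, div_zero, div_zero]
    · gcongr
  exact h1.trans (hσ i j hij)

-- helper used above: monotone division by positive constant
end

section
/- Universal lower bound on time cost (intersection-free bound, the content of inequality (4) in the proof of Theorem 2): For every permutation Π of the l sources and every 1 ≤ k ≤ |S_1 ∪ … ∪ S_l|, the average query rate satisfies v_avg(Π,k) ≤ max_{1≤i≤l} |S_i|/(ta_i + tr_i·|S_i|), and consequently the time cost of every permutation — in particular the optimal one — satisfies T(Q_k(Π)) ≥ k · min_{1≤i≤l} (ta_i + tr_i·|S_i|)/|S_i|. That is, no permutation can beat the rate achievable when all intersection tuples are ignored. -/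
open Finset

variable {α : Type*}

/-!
Intersections can only shrink what a source contributes: the residual count `r_i` never exceeds
`|S_(i)|`. Hence, if `M` bounds every rate `|S_i| / (ta_i + tr_i·|S_i|)`, then
`r_i ≤ M·(ta_(i) + tr_(i)·|S_(i)|)` for each position, and summing over the first `i_k` positions
bounds `v_avg` by `M` (a mediant inequality). Dually, with `m` the least inverse rate,
`m·Σ r_i ≤ Σ (ta_(i) + tr_(i)·|S_(i)|)`, so `T = k·Σ time / Σ r ≥ k·m` as soon as `Σ r ≥ k > 0`,
which is what the choice of `i_k` guarantees.
-/

section Residuals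

variable [DecidableEq α] {l : ℕ} (S : Fin l → Finset α) (σ : Equiv.Perm (Fin l))

lemma filter_val_lt_succ {p : ℕ} (hp : p < l) :
    univ.filter (fun i : Fin l => (i : ℕ) < p + 1) =
      insert ⟨p, hp⟩ (univ.filter (fun i : Fin l => (i : ℕ) < p)) := by
  ext i
  simp only [mem_filter, mem_univ, true_and, mem_insert, Fin.ext_iff]
  omega

lemma filter_val_lt_of_le {p : ℕ} (hp : l ≤ p) :
    univ.filter (fun i : Fin l => (i : ℕ) < p) = univ :=
  filter_true_of_mem fun i _ => i.isLt.trans_le hp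

lemma prefUnion_of_le {p : ℕ} (hp : l ≤ p) : prefUnion S σ p = univ.biUnion S := by
  ext x
  simp only [prefUnion, filter_val_lt_of_le hp, mem_biUnion, mem_univ, true_and]
  exact σ.exists_congr fun _ => Iff.rfl

lemma cumResid_eq_card_prefUnion (p : ℕ) : cumResid S σ p = (prefUnion S σ p).card := by
  induction p with
  | zero => simp [cumResid, prefUnion]
  | succ p ih =>
    rcases lt_or_ge p l with hp | hp
    · rw [cumResid, prefUnion, filter_val_lt_succ hp, sum_insert (by simp), biUnion_insert,
        ← cumResid, ih, ← card_sdiff_add_card]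
      rfl
    · simpa only [cumResid, prefUnion, filter_val_lt_of_le hp,
        filter_val_lt_of_le (hp.trans p.le_succ)] using ih

lemma le_cumResid_ikOf {k : ℕ} (hk : k ≤ (univ.biUnion S).card) :
    k ≤ cumResid S σ (ikOf S σ k) :=
  Nat.sInf_mem (s := {p | k ≤ cumResid S σ p})
    ⟨l, by rwa [Set.mem_ofPred_eq, cumResid_eq_card_prefUnion, prefUnion_of_le S σ le_rfl]⟩

lemma resid_le_card (i : Fin l) : resid S σ i ≤ (S (σ i)).card :=
  card_le_card sdiff_subset

end Residuals

section Rates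

variable {l : ℕ} (S : Fin l → Finset α) (ta tr : Fin l → ℝ) (σ : Equiv.Perm (Fin l)) {i : Fin l}

lemma srcTime_nonneg (hta : 0 ≤ ta i) (htr : 0 ≤ tr i) : 0 ≤ srcTime S ta tr i := by
  unfold srcTime
  positivity

lemma card_eq_zero_of_srcTime_eq_zero (hta : 0 ≤ ta i) (htr : 0 < tr i)
    (h : srcTime S ta tr i = 0) : ((S i).card : ℝ) = 0 := by
  have hpos : 0 ≤ ((S i).card : ℝ) := Nat.cast_nonneg _
  unfold srcTime at h
  nlinarith

lemma card_le_mul_srcTime_of_div_le {M : ℝ} (hta : 0 ≤ ta i) (htr : 0 < tr i)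
    (hM : ((S i).card : ℝ) / srcTime S ta tr i ≤ M) :
    ((S i).card : ℝ) ≤ M * srcTime S ta tr i :=
  calc ((S i).card : ℝ)
      = (S i).card / srcTime S ta tr i * srcTime S ta tr i :=
        (div_mul_cancel_of_imp (card_eq_zero_of_srcTime_eq_zero S ta tr hta htr)).symm
    _ ≤ M * srcTime S ta tr i :=
        mul_le_mul_of_nonneg_right hM (srcTime_nonneg S ta tr hta htr.le)

lemma cumTime_nonneg (h : ∀ i, 0 ≤ srcTime S ta tr i) (p : ℕ) : 0 ≤ cumTime S ta tr σ p :=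
  sum_nonneg fun i _ => h (σ i)

end Rates

section Bounds

variable [DecidableEq α] {l : ℕ} (S : Fin l → Finset α) (ta tr : Fin l → ℝ)
  (σ : Equiv.Perm (Fin l))

lemma cumResid_le_mul_cumTime {M : ℝ} (h : ∀ i, ((S i).card : ℝ) ≤ M * srcTime S ta tr i)
    (p : ℕ) : (cumResid S σ p : ℝ) ≤ M * cumTime S ta tr σ p := by
  rw [cumResid, cumTime, Nat.cast_sum, mul_sum]
  exact sum_le_sum fun i _ => (Nat.cast_le.2 (resid_le_card S σ i)).trans (h (σ i))

lemma mul_cumResid_le_cumTime {m : ℝ} (hm : 0 ≤ m)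
    (h : ∀ i, m * (S i).card ≤ srcTime S ta tr i) (p : ℕ) :
    m * cumResid S σ p ≤ cumTime S ta tr σ p := by
  rw [cumResid, cumTime, Nat.cast_sum, mul_sum]
  exact sum_le_sum fun i _ =>
    (mul_le_mul_of_nonneg_left (Nat.cast_le.2 (resid_le_card S σ i)) hm).trans (h (σ i))

lemma vAvg_le {M : ℝ} (hM : 0 ≤ M) (hT : ∀ i, 0 ≤ srcTime S ta tr i)
    (h : ∀ i, ((S i).card : ℝ) ≤ M * srcTime S ta tr i) (k : ℕ) : vAvg S ta tr σ k ≤ M :=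
  div_le_of_le_mul₀ (cumTime_nonneg S ta tr σ hT _) hM (cumResid_le_mul_cumTime S ta tr σ h _)

lemma mul_le_timeCost {m : ℝ} (hm : 0 ≤ m) (h : ∀ i, m * (S i).card ≤ srcTime S ta tr i)
    {k : ℕ} (hk : k ≤ (univ.biUnion S).card) : k * m ≤ timeCost S ta tr σ k := by
  rcases k.eq_zero_or_pos with rfl | hk0
  · simp [timeCost]
  have hR : (k : ℝ) ≤ cumResid S σ (ikOf S σ k) := by exact_mod_cast le_cumResid_ikOf S σ hk
  have hR0 : (0 : ℝ) < cumResid S σ (ikOf S σ k) := (Nat.cast_pos.2 hk0).trans_le hR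
  rw [timeCost, vAvg, div_div_eq_mul_div, le_div_iff₀ hR0, mul_assoc]
  exact mul_le_mul_of_nonneg_left (mul_cumResid_le_cumTime S ta tr σ hm h _) k.cast_nonneg

end Bounds

theorem timeCost_lower_bound_general [DecidableEq α] {l : ℕ} (hl : 0 < l)
    (S : Fin l → Finset α) (ta tr : Fin l → ℝ)
    (hta : ∀ i, 0 ≤ ta i) (htr : ∀ i, 0 < tr i)
    (k : ℕ) (hk2 : k ≤ (Finset.univ.biUnion S).card)
    (σ : Equiv.Perm (Fin l)) :
    vAvg S ta tr σ k ≤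
      Finset.univ.sup' ⟨⟨0, hl⟩, Finset.mem_univ _⟩
        (fun i => ((S i).card : ℝ) / srcTime S ta tr i) ∧
    (k : ℝ) * Finset.univ.inf' ⟨⟨0, hl⟩, Finset.mem_univ _⟩
        (fun i => srcTime S ta tr i / ((S i).card : ℝ))
      ≤ timeCost S ta tr σ k := by
  set rate := fun i => ((S i).card : ℝ) / srcTime S ta tr i
  set cost := fun i => srcTime S ta tr i / ((S i).card : ℝ)
  have hT i : 0 ≤ srcTime S ta tr i := srcTime_nonneg S ta tr (hta i) (htr i).le
  constructor
  · refine vAvg_le S ta tr σ (le_sup'_of_le rate (mem_univ ⟨0, hl⟩) ?_) hT (fun i => ?_) k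
    · exact div_nonneg (Nat.cast_nonneg _) (hT _)
    · exact card_le_mul_srcTime_of_div_le S ta tr (hta i) (htr i) (le_sup' rate (mem_univ i))
  · refine mul_le_timeCost S ta tr σ (le_inf' _ _ fun i _ => ?_) (fun i => ?_) hk2
    · exact div_nonneg (hT i) (Nat.cast_nonneg _)
    · exact mul_le_of_le_div₀ (hT i) (Nat.cast_nonneg _) (inf'_le cost (mem_univ i))

/-- **Universal lower bound on time cost** (inequality (4) in the proof of
Theorem 2). For every permutation `Π` and every `1 ≤ k ≤ |S_1 ∪ … ∪ S_l|`,
the average query rate never exceeds the best intersection-free rate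
`max_i |S_i|/(ta_i + tr_i·|S_i|)`, and consequently
`T(Q_k(Π)) ≥ k · min_i (ta_i + tr_i·|S_i|)/|S_i|`. -/
theorem timeCost_lower_bound [DecidableEq α] {l : ℕ} (hl : 0 < l)
    (S : Fin l → Finset α) (ta tr : Fin l → ℝ)
    (hS : ∀ i, (S i).Nonempty) (hta : ∀ i, 0 ≤ ta i) (htr : ∀ i, 0 < tr i)
    (k : ℕ) (hk1 : 1 ≤ k) (hk2 : k ≤ (Finset.univ.biUnion S).card)
    (σ : Equiv.Perm (Fin l)) :
    vAvg S ta tr σ k ≤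
      Finset.univ.sup' ⟨⟨0, hl⟩, Finset.mem_univ _⟩
        (fun i => ((S i).card : ℝ) / srcTime S ta tr i) ∧
    (k : ℝ) * Finset.univ.inf' ⟨⟨0, hl⟩, Finset.mem_univ _⟩
        (fun i => srcTime S ta tr i / ((S i).card : ℝ))
      ≤ timeCost S ta tr σ k :=
  timeCost_lower_bound_general hl S ta tr hta htr k hk2 σ
end
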